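/- If there exists an H-unitary matrix V ∈ ℂ^{n,n} with X = V X^{[*]}, then X admits an H-polar decomposition X = UA with UA = AU. -/

import Mathlib

/-
Since `V` is `H`-unitary, `X = V X^{[*]}` gives `X^{[*]} = V⁻¹ X = X V^{[*]}`, so `V` commutes with
`X`. The heart of the matter is an `H`-unitary square root `U` of `V` that is a polynomial in `V`.
Modulo the minimal polynomial `m` of `V`, Newton's iteration and the Chinese remainder theorem
give `p` with `p² ≡ X` and `p(a) = √a` (principal branch) at every root `a` of `m`. The roots of
`m` are stable under `a ↦ (conj a)⁻¹`, because `V^{[*]} = V⁻¹`, and the principal branch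
satisfies `√((conj a)⁻¹) = (conj √a)⁻¹`. Hence `W = U^{[*]} U`, itself a polynomial in `V`,
satisfies `W² = 1` and equals `1` at every root of `m`, so `W = 1`. Finally `A = U^{[*]} X`
is `H`-selfadjoint and commutes with `U`.
-/

open Polynomial Matrix ComplexConjugate

namespace Polynomial

variable {K : Type*} [Field K]

theorem exists_sqrt_X_mod_X_sub_C_pow {a b : K} (hb : b * b = a) (h2b : 2 * b ≠ 0) (k : ℕ) :
    ∃ q : K[X], q.eval a = b ∧ (X - C a) ^ k ∣ q * q - X := by
  induction k with
  | zero => exact ⟨C b, by simp, by simp⟩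
  | succ k ih =>
    obtain ⟨q, hqa, hdvd⟩ := ih
    -- one Newton step `q ↦ q - (q² - X) / (2 b)` gains a factor `X - C a`
    have hb0 : b ≠ 0 := right_ne_zero_of_mul h2b
    have h2 : (2 : K) ≠ 0 := left_ne_zero_of_mul h2b
    refine ⟨q - (q * q - X) * C (2 * b)⁻¹, by simp [hqa, hb], ?_⟩
    have hstep : (q - (q * q - X) * C (2 * b)⁻¹) * (q - (q * q - X) * C (2 * b)⁻¹) - X =
        (q * q - X) * (1 - 2 * q * C (2 * b)⁻¹ + (q * q - X) * C (2 * b)⁻¹ * C (2 * b)⁻¹) := by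
      ring
    rw [hstep, pow_succ]
    refine mul_dvd_mul hdvd (dvd_iff_isRoot.mpr ?_)
    simp only [IsRoot, eval_add, eval_sub, eval_mul, eval_one, eval_C, eval_X, eval_ofNat, hqa, hb]
    field_simp
    ring

theorem exists_X_sub_C_pow_dvd_sub (s : Finset K) (k : K → ℕ) (q : K → K[X]) :
    ∃ p : K[X], ∀ a ∈ s, (X - C a) ^ k a ∣ p - q a := by
  classical
  have hprime (a : K) : Prime (Ideal.span {X - C a}) :=
    Ideal.prime_of_isPrime (by simpa using X_sub_C_ne_zero a)
      ((Ideal.span_singleton_prime (X_sub_C_ne_zero a)).mpr (prime_X_sub_C a))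
  have hinj (a b : K) (hab : a ≠ b) : Ideal.span {X - C a} ≠ Ideal.span {X - C b} := by
    intro h
    have := Ideal.mem_span_singleton.mp (h ▸ Ideal.mem_span_singleton_self (X - C a))
    exact hab (by simpa [sub_eq_zero, eq_comm] using dvd_iff_isRoot.mp this)
  obtain ⟨p, hp⟩ := IsDedekindDomain.exists_forall_sub_mem_ideal (s := s)
    (fun a => Ideal.span {X - C a}) k (fun a _ => hprime a) (fun a _ b _ => hinj a b)
    (fun a => q a)
  exact ⟨p, fun a ha => by simpa [Ideal.span_singleton_pow, Ideal.mem_span_singleton] using hp a ha⟩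

theorem dvd_of_forall_X_sub_C_pow_rootMultiplicity_dvd [IsAlgClosed K] {p q : K[X]} (hp : p ≠ 0)
    (h : ∀ a, p.IsRoot a → (X - C a) ^ p.rootMultiplicity a ∣ q) : p ∣ q := by
  classical
  rcases eq_or_ne q 0 with rfl | hq
  · exact dvd_zero p
  rw [IsAlgClosed.dvd_iff_roots_le_roots hp hq, Multiset.le_iff_count]
  intro a
  rw [count_roots, count_roots]
  by_cases ha : p.IsRoot a
  · exact (le_rootMultiplicity_iff hq).mpr (h a ha)
  · simp [rootMultiplicity_eq_zero ha]

theorem exists_sqrt_X_mod [IsAlgClosed K] (h2 : (2 : K) ≠ 0) {m : K[X]} (hm : m ≠ 0)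
    (h0 : ¬ m.IsRoot 0) (s : K → K) (hs : ∀ a, m.IsRoot a → s a * s a = a) :
    ∃ p : K[X], m ∣ p * p - X ∧ ∀ a, m.IsRoot a → p.eval a = s a := by
  classical
  have hlocal (a : K) : ∃ q : K[X], m.IsRoot a →
      q.eval a = s a ∧ (X - C a) ^ m.rootMultiplicity a ∣ q * q - X := by
    by_cases ha : m.IsRoot a
    · have hsa : s a ≠ 0 := fun h => h0 (by rwa [← hs a ha, h, zero_mul] at ha)
      obtain ⟨q, hq⟩ := exists_sqrt_X_mod_X_sub_C_pow (hs a ha) (mul_ne_zero h2 hsa) _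
      exact ⟨q, fun _ => hq⟩
    · exact ⟨0, fun h => absurd h ha⟩
  choose q hq using hlocal
  obtain ⟨p, hp⟩ := exists_X_sub_C_pow_dvd_sub m.roots.toFinset m.rootMultiplicity q
  have hmem {a : K} (ha : m.IsRoot a) : a ∈ m.roots.toFinset := by simpa [hm] using ha
  refine ⟨p, dvd_of_forall_X_sub_C_pow_rootMultiplicity_dvd hm fun a ha => ?_, fun a ha => ?_⟩
  · rw [show p * p - X = (p - q a) * (p + q a) + (q a * q a - X) by ring]
    exact dvd_add (dvd_mul_of_dvd_left (hp a (hmem ha)) _) (hq a ha).2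
  · have hdvd : X - C a ∣ p - q a :=
      (dvd_pow_self _ ((rootMultiplicity_pos hm).mpr ha).ne').trans (hp a (hmem ha))
    rw [← (hq a ha).1, ← sub_eq_zero]
    simpa using dvd_iff_isRoot.mp hdvd

theorem dvd_sub_one_of_dvd_mul_self_sub_one [IsAlgClosed K] (h2 : (2 : K) ≠ 0) {m w : K[X]}
    (hw : m ∣ w * w - 1) (h1 : ∀ a, m.IsRoot a → w.eval a = 1) : m ∣ w - 1 := by
  have hcop : IsCoprime m (w + 1) := by
    refine (isCoprime_iff_aeval_ne_zero_of_isAlgClosed K K m (w + 1)).mpr fun a => ?_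
    simp only [coe_aeval_eq_eval, eval_add, eval_one, or_iff_not_imp_left, not_not]
    intro ha
    rw [h1 a ha, one_add_one_eq_two]
    exact h2
  exact hcop.dvd_of_dvd_mul_right (by rwa [show (w - 1) * (w + 1) = w * w - 1 by ring])

theorem exists_dvd_X_mul_sub_one {m : K[X]} (h0 : ¬ m.IsRoot 0) : ∃ r : K[X], m ∣ X * r - 1 := by
  obtain ⟨u, v, huv⟩ := prime_X.coprime_iff_not_dvd.mpr (by
    rwa [X_dvd_iff, coeff_zero_eq_eval_zero] : ¬ (X : K[X]) ∣ m)
  exact ⟨u, -v, by linear_combination huv⟩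

theorem eval_map_starRingEnd {R : Type*} [CommSemiring R] [StarRing R] (p : R[X]) (z : R) :
    (p.map (starRingEnd R)).eval z = conj (p.eval (conj z)) := by
  rw [eval_map, ← eval₂_at_apply, starRingEnd_self_apply]

end Polynomial

namespace Complex

theorem log_inv_conj {z : ℂ} (hz : z ≠ 0) : log (conj z)⁻¹ = -conj (log z) := by
  have hinv : (conj z)⁻¹ = ((normSq z)⁻¹ : ℝ) * z := by
    rw [inv_def, conj_conj, normSq_conj, mul_comm]
  rw [hinv, log_ofReal_mul (inv_pos.mpr (normSq_pos.mpr hz)) hz, Real.log_inv,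
    normSq_eq_norm_sq, Real.log_pow]
  apply Complex.ext <;> simp [log_re, log_im]; ring

theorem conj_cpow_inv_two_inv_conj_mul_cpow_inv_two {z : ℂ} (hz : z ≠ 0) :
    conj ((conj z)⁻¹ ^ (2⁻¹ : ℂ)) * z ^ (2⁻¹ : ℂ) = 1 := by
  rw [cpow_def_of_ne_zero (by simpa using hz), cpow_def_of_ne_zero hz, log_inv_conj hz,
    ← exp_conj, ← exp_add]
  simp [map_ofNat]

end Complex

theorem Commute.aeval_left {R A : Type*} [CommSemiring R] [Semiring A] [Algebra R A] {a b : A}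
    (h : Commute a b) (p : R[X]) : Commute (aeval a p) b := by
  induction p using Polynomial.induction_on' with
  | add p q hp hq => rw [map_add]; exact hp.add_left hq
  | monomial k c =>
    rw [aeval_monomial]
    exact (Algebra.commute_algebraMap_left c b).mul_left (h.pow_left k)

namespace Matrix

variable {n : Type*} [Fintype n] [DecidableEq n]

section HAdjoint

variable {𝕜 : Type*} [Field 𝕜] [StarRing 𝕜]

noncomputable def hAdjoint (H A : Matrix n n 𝕜) : Matrix n n 𝕜 := H⁻¹ * Aᴴ * H

variable {H : Matrix n n 𝕜}

theorem hAdjoint_one (hH : IsUnit H.det) : hAdjoint H 1 = 1 := by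
  rw [hAdjoint, conjTranspose_one, mul_one, nonsing_inv_mul H hH]

theorem hAdjoint_zero : hAdjoint H 0 = 0 := by
  rw [hAdjoint, conjTranspose_zero, Matrix.mul_zero, Matrix.zero_mul]

theorem hAdjoint_add (A B : Matrix n n 𝕜) : hAdjoint H (A + B) = hAdjoint H A + hAdjoint H B := by
  rw [hAdjoint, conjTranspose_add, mul_add, add_mul]; rfl

theorem hAdjoint_smul (c : 𝕜) (A : Matrix n n 𝕜) : hAdjoint H (c • A) = star c • hAdjoint H A := by
  rw [hAdjoint, hAdjoint, conjTranspose_smul, Matrix.mul_smul, Matrix.smul_mul]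

theorem hAdjoint_mul (hH : IsUnit H.det) (A B : Matrix n n 𝕜) :
    hAdjoint H (A * B) = hAdjoint H B * hAdjoint H A := by
  simp only [hAdjoint, conjTranspose_mul, Matrix.mul_assoc]
  rw [mul_nonsing_inv_cancel_left H _ hH]

theorem hAdjoint_pow (hH : IsUnit H.det) (A : Matrix n n 𝕜) (k : ℕ) :
    hAdjoint H (A ^ k) = hAdjoint H A ^ k := by
  induction k with
  | zero => rw [pow_zero, pow_zero, hAdjoint_one hH]
  | succ k ih => rw [pow_succ, hAdjoint_mul hH, ih, pow_succ']

theorem hAdjoint_aeval (hH : IsUnit H.det) (A : Matrix n n 𝕜) (p : 𝕜[X]) :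
    hAdjoint H (aeval A p) = aeval (hAdjoint H A) (p.map (starRingEnd 𝕜)) := by
  induction p using Polynomial.induction_on' with
  | add p q hp hq => rw [map_add, hAdjoint_add, hp, hq, Polynomial.map_add, map_add]
  | monomial k c =>
    rw [Polynomial.map_monomial, aeval_monomial, aeval_monomial, ← Algebra.smul_def,
      ← Algebra.smul_def, hAdjoint_smul, hAdjoint_pow hH]
    rfl

theorem hAdjoint_hAdjoint (hHh : H.IsHermitian) (hH : IsUnit H.det) (A : Matrix n n 𝕜) :
    hAdjoint H (hAdjoint H A) = A := by
  simp only [hAdjoint, conjTranspose_mul, conjTranspose_nonsing_inv, hHh.eq,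
    conjTranspose_conjTranspose, Matrix.mul_assoc, nonsing_inv_mul_cancel_left _ _ hH,
    nonsing_inv_mul _ hH, mul_one]

end HAdjoint

theorem not_isRoot_minpoly_zero {K : Type*} [Field K] {V : Matrix n n K} (hV : IsUnit V.det) :
    ¬ (minpoly K V).IsRoot 0 := by
  intro h
  have hchar : V.charpoly.IsRoot 0 :=
    dvd_iff_isRoot.mp ((dvd_iff_isRoot.mpr h).trans (minpoly_dvd_charpoly V))
  rw [det_eq_sign_charpoly_coeff, coeff_zero_eq_eval_zero, hchar.eq_zero, mul_zero] at hV
  exact not_isUnit_zero hV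

theorem exists_aeval_eq_nonsing_inv {K : Type*} [Field K] {V : Matrix n n K} (hV : IsUnit V.det) :
    ∃ r : K[X], aeval V r = V⁻¹ ∧ ∀ a, (minpoly K V).IsRoot a → r.eval a = a⁻¹ := by
  obtain ⟨r, hr⟩ := exists_dvd_X_mul_sub_one (not_isRoot_minpoly_zero hV)
  refine ⟨r, (inv_eq_right_inv ?_).symm, fun a ha => ?_⟩
  · simpa [sub_eq_zero] using minpoly.dvd_iff.mp hr
  · have := eval_eq_zero_of_dvd_of_eval_eq_zero hr ha
    rw [eval_sub, eval_mul, eval_X, eval_one, sub_eq_zero] at this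
    exact eq_inv_of_mul_eq_one_right this

variable {H V X : Matrix n n ℂ}

theorem isRoot_minpoly_inv_conj (hH : IsUnit H.det) (hV : hAdjoint H V * V = 1) {a : ℂ}
    (ha : (minpoly ℂ V).IsRoot a) : (minpoly ℂ V).IsRoot (conj a)⁻¹ := by
  obtain ⟨r, hrV, hr⟩ := exists_aeval_eq_nonsing_inv (isUnit_det_of_left_inverse hV)
  have hdvd : minpoly ℂ V ∣ ((minpoly ℂ V).map (starRingEnd ℂ)).comp r := by
    refine minpoly.dvd_iff.mpr ?_
    rw [aeval_comp, hrV, inv_eq_left_inv hV, ← hAdjoint_aeval hH, minpoly.aeval, hAdjoint_zero]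
  have := eval_eq_zero_of_dvd_of_eval_eq_zero hdvd ha
  rwa [eval_comp, hr a ha, eval_map_starRingEnd, map_eq_zero, map_inv₀] at this

theorem exists_hUnitary_sqrt_polynomial (hH : IsUnit H.det) (hV : hAdjoint H V * V = 1) :
    ∃ p : ℂ[X], aeval V p * aeval V p = V ∧ hAdjoint H (aeval V p) * aeval V p = 1 := by
  set m := minpoly ℂ V
  have hm : m ≠ 0 := minpoly.ne_zero (Algebra.IsIntegral.isIntegral V)
  have h0 : ¬ m.IsRoot 0 := not_isRoot_minpoly_zero (isUnit_det_of_left_inverse hV)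
  obtain ⟨r, hrV, hr⟩ := exists_aeval_eq_nonsing_inv (isUnit_det_of_left_inverse hV)
  obtain ⟨p, hpX, hp⟩ := exists_sqrt_X_mod two_ne_zero hm h0 (fun a => a ^ (2⁻¹ : ℂ))
    (fun a _ => by rw [← sq, Complex.cpow_ofNat_inv_pow])
  set U := aeval V p
  have hU : U * U = V := by simpa [sub_eq_zero] using minpoly.dvd_iff.mp hpX
  set w := (p.map (starRingEnd ℂ)).comp r * p
  have hUadj : aeval V ((p.map (starRingEnd ℂ)).comp r) = hAdjoint H U := by
    rw [aeval_comp, hrV, inv_eq_left_inv hV, hAdjoint_aeval hH]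
  have hw : aeval V w = hAdjoint H U * U := by rw [map_mul, hUadj]
  have hw_sq : m ∣ w * w - 1 := by
    refine minpoly.dvd_iff.mpr ?_
    rw [map_sub, map_mul, hw, map_one, sub_eq_zero]
    have hcomm : Commute U (hAdjoint H U) := hUadj ▸ (Commute.all p _).map (aeval V)
    calc hAdjoint H U * U * (hAdjoint H U * U) = hAdjoint H (U * U) * (U * U) := by
          rw [hcomm.mul_mul_mul_comm, hAdjoint_mul hH]
      _ = 1 := by rw [hU, hV]
  have hw_eval (a : ℂ) (ha : m.IsRoot a) : w.eval a = 1 := by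
    have ha0 : a ≠ 0 := by rintro rfl; exact h0 ha
    rw [eval_mul, eval_comp, hr a ha, eval_map_starRingEnd, map_inv₀,
      hp _ (isRoot_minpoly_inv_conj hH hV ha), hp a ha]
    exact Complex.conj_cpow_inv_two_inv_conj_mul_cpow_inv_two ha0
  refine ⟨p, hU, ?_⟩
  rw [← hw, ← sub_eq_zero, ← map_one (aeval (R := ℂ) V), ← map_sub]
  exact minpoly.dvd_iff.mp (dvd_sub_one_of_dvd_mul_self_sub_one two_ne_zero hw_sq hw_eval)

theorem hAdjoint_eq_mul_hAdjoint (hHh : H.IsHermitian) (hH : IsUnit H.det)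
    (hX : X = V * hAdjoint H X) : hAdjoint H X = X * hAdjoint H V := by
  conv_lhs => rw [hX]
  rw [hAdjoint_mul hH, hAdjoint_hAdjoint hHh hH]

theorem commute_of_eq_mul_hAdjoint (hHh : H.IsHermitian) (hH : IsUnit H.det)
    (hV : hAdjoint H V * V = 1) (hX : X = V * hAdjoint H X) : Commute V X := by
  have hVadj : Commute (hAdjoint H V) X := by
    calc hAdjoint H V * X = hAdjoint H V * V * hAdjoint H X := by rw [Matrix.mul_assoc, ← hX]
      _ = X * hAdjoint H V := by rw [hV, Matrix.one_mul, hAdjoint_eq_mul_hAdjoint hHh hH hX]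
  exact Commute.units_inv_left (u := ⟨hAdjoint H V, V, hV, mul_eq_one_comm.mp hV⟩) hVadj

end Matrix

/-- If X = V X^{[*]} for some H-unitary V, then X admits an H-polar decomposition with
commuting factors. -/
theorem hPolar_comm_of_hUnitary_times_adjoint {n : ℕ}
    (H X V : Matrix (Fin n) (Fin n) ℂ) (hH : H.IsHermitian) (hdet : IsUnit H.det)
    (hV : H⁻¹ * Vᴴ * H * V = 1) (hX : X = V * (H⁻¹ * Xᴴ * H)) :
    ∃ U A : Matrix (Fin n) (Fin n) ℂ,
      H⁻¹ * Uᴴ * H * U = 1 ∧ H⁻¹ * Aᴴ * H = A ∧ X = U * A ∧ U * A = A * U := by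
  change hAdjoint H V * V = 1 at hV
  change X = V * hAdjoint H X at hX
  obtain ⟨p, hUU, hU⟩ := exists_hUnitary_sqrt_polynomial hdet hV
  set U := aeval V p
  have hU' : U * hAdjoint H U = 1 := mul_eq_one_comm.mp hU
  have hUX : Commute U X := (commute_of_eq_mul_hAdjoint hH hdet hV hX).aeval_left p
  have hUadjX : Commute (hAdjoint H U) X :=
    Commute.units_inv_left (u := ⟨U, hAdjoint H U, hU', hU⟩) hUX
  refine ⟨U, hAdjoint H U * X, hU, ?_, ?_, ?_⟩
  · change hAdjoint H (hAdjoint H U * X) = hAdjoint H U * X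
    rw [hAdjoint_mul hdet, hAdjoint_hAdjoint hH hdet, hAdjoint_eq_mul_hAdjoint hH hdet hX, ← hUU,
      hAdjoint_mul hdet, Matrix.mul_assoc, Matrix.mul_assoc, hU, Matrix.mul_one, hUadjX.eq]
  · rw [← Matrix.mul_assoc, hU', Matrix.one_mul]
  · rw [← Matrix.mul_assoc, hU', Matrix.one_mul, Matrix.mul_assoc, ← hUX.eq, ← Matrix.mul_assoc,
      hU, Matrix.one_mul]
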